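/- arXiv:2102.09636 — 5 statements merged into one kernel-verified Lean document; each statement's English description precedes it below -/
import Mathlib

section
/- If (U,V) has joint density p(u,v) = (1-u)/(v-u)² · 1_{0<u<1<v}, then V has density p_V(v) = -ln(1 - 1/v) - 1/v for v > 1. -/
/-!
By Tonelli, the density of `V` is the joint density with `u` integrated out. For `v > 1` the
integrand `(1 - u) / (v - u) ^ 2` has the primitive `-log (v - u) - (v - 1) / (v - u)` on `[0, 1]`,
whose increment is `-log (1 - 1 / v) - 1 / v`.
-/

open MeasureTheory Set ENNReal

theorem MeasureTheory.Measure.map_snd_withDensity_prod {α β : Type*} [MeasurableSpace α]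
    [MeasurableSpace β] (μ : Measure α) (ν : Measure β) [SFinite μ] [SFinite ν]
    {f : α × β → ℝ≥0∞} (hf : Measurable f) :
    ((μ.prod ν).withDensity f).map Prod.snd = ν.withDensity fun y => ∫⁻ x, f (x, y) ∂μ := by
  ext s hs
  rw [Measure.map_apply measurable_snd hs, withDensity_apply _ (measurable_snd hs),
    withDensity_apply _ hs, ← univ_prod, ← Measure.prod_restrict, Measure.restrict_univ,
    lintegral_prod_symm _ hf.aemeasurable]

theorem hasDerivAt_neg_log_sub_sub_div {u v : ℝ} (h : u ≠ v) :
    HasDerivAt (fun u => -Real.log (v - u) - (v - 1) / (v - u)) ((1 - u) / (v - u) ^ 2) u := by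
  have hvu : v - u ≠ 0 := sub_ne_zero.mpr h.symm
  have hlin : HasDerivAt (fun u : ℝ => v - u) (-1) u := by
    simpa using (hasDerivAt_id u).const_sub v
  refine ((hlin.log hvu).neg.sub ((hasDerivAt_const u (v - 1)).div hlin hvu)).congr_deriv ?_
  field_simp
  ring

theorem intervalIntegrable_one_sub_div_sq {v : ℝ} (hv : 1 < v) :
    IntervalIntegrable (fun u => (1 - u) / (v - u) ^ 2) volume 0 1 := by
  refine (ContinuousOn.div (by fun_prop) (by fun_prop) fun u hu => ?_).intervalIntegrable
  rw [uIcc_of_le zero_le_one] at hu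
  exact pow_ne_zero _ (by linarith [hu.2])

theorem integral_one_sub_div_sq {v : ℝ} (hv : 1 < v) :
    ∫ u in (0 : ℝ)..1, (1 - u) / (v - u) ^ 2 = -Real.log (1 - 1 / v) - 1 / v := by
  have hv0 : v ≠ 0 := by positivity
  have hv1 : v - 1 ≠ 0 := by linarith
  have hne : ∀ u ∈ uIcc (0 : ℝ) 1, u ≠ v := fun u hu => by
    rw [uIcc_of_le zero_le_one] at hu
    linarith [hu.2]
  rw [intervalIntegral.integral_eq_sub_of_hasDerivAt
      (fun u hu => hasDerivAt_neg_log_sub_sub_div (hne u hu))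
      (intervalIntegrable_one_sub_div_sq hv),
    show (1 : ℝ) - 1 / v = (v - 1) / v by field_simp, Real.log_div hv1 hv0, sub_zero,
    div_self hv1]
  field_simp
  ring

theorem lintegral_ofReal_one_sub_div_sq (v : ℝ) :
    ∫⁻ u, ENNReal.ofReal (if 0 < u ∧ u < 1 ∧ 1 < v then (1 - u) / (v - u) ^ 2 else 0) =
      ENNReal.ofReal (if 1 < v then -Real.log (1 - 1 / v) - 1 / v else 0) := by
  rcases le_or_gt v 1 with hv | hv
  · simp [hv.not_gt]
  have hind :
      (fun u => ENNReal.ofReal (if 0 < u ∧ u < 1 ∧ 1 < v then (1 - u) / (v - u) ^ 2 else 0)) =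
        (Ioo 0 1).indicator fun u => ENNReal.ofReal ((1 - u) / (v - u) ^ 2) := by
    ext u
    by_cases hu : 0 < u ∧ u < 1 <;> simp [indicator, hu, hv]
  have hnonneg : ∀ᵐ u ∂volume.restrict (Ioo (0 : ℝ) 1), 0 ≤ (1 - u) / (v - u) ^ 2 := by
    filter_upwards [ae_restrict_mem measurableSet_Ioo] with u hu
    have : 0 ≤ 1 - u := by linarith [hu.2]
    positivity
  rw [hind, lintegral_indicator measurableSet_Ioo, if_pos hv, ← integral_one_sub_div_sq hv,
    intervalIntegral.integral_of_le zero_le_one, integral_Ioc_eq_integral_Ioo,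
    ofReal_integral_eq_lintegral_ofReal _ hnonneg]
  exact (intervalIntegrable_iff_integrableOn_Ioo_of_le zero_le_one).mp
    (intervalIntegrable_one_sub_div_sq hv)

theorem stmt2_general {Ω : Type*} [MeasurableSpace Ω] (P : Measure Ω)
    (U V : Ω → ℝ) (hU : Measurable U) (hV : Measurable V)
    (p : ℝ → ℝ → ℝ)
    (hp : ∀ u v, p u v = if 0 < u ∧ u < 1 ∧ 1 < v then (1 - u) / (v - u) ^ 2 else 0)
    (hjoint : P.map (fun ω => (U ω, V ω)) =
      (volume : Measure (ℝ × ℝ)).withDensity (fun x => ENNReal.ofReal (p x.1 x.2))) :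
    P.map V = (volume : Measure ℝ).withDensity
      (fun v => ENNReal.ofReal (if 1 < v then -Real.log (1 - 1/v) - 1/v else 0)) := by
  have hp_meas : Measurable fun x : ℝ × ℝ => ENNReal.ofReal (p x.1 x.2) := by
    simp only [hp]
    exact Measurable.ennreal_ofReal (Measurable.ite (by measurability) (by fun_prop) (by fun_prop))
  have hV_eq : V = Prod.snd ∘ fun ω => (U ω, V ω) := rfl
  rw [hV_eq, ← Measure.map_map measurable_snd (hU.prodMk hV), hjoint, Measure.volume_eq_prod,
    Measure.map_snd_withDensity_prod _ _ hp_meas]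
  simp only [hp, lintegral_ofReal_one_sub_div_sq]

/-- If (U,V) has joint density p(u,v) = (1-u)/(v-u)²·1_{0<u<1<v}, then V has density
p_V(v) = -ln(1-1/v) - 1/v for v > 1. -/
theorem stmt2 {Ω : Type*} [MeasurableSpace Ω] (P : Measure Ω) [IsProbabilityMeasure P]
    (U V : Ω → ℝ) (hU : Measurable U) (hV : Measurable V)
    (p : ℝ → ℝ → ℝ)
    (hp : ∀ u v, p u v = if 0 < u ∧ u < 1 ∧ 1 < v then (1 - u) / (v - u) ^ 2 else 0)
    (hjoint : P.map (fun ω => (U ω, V ω)) =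
      (volume : Measure (ℝ × ℝ)).withDensity (fun x => ENNReal.ofReal (p x.1 x.2))) :
    P.map V = (volume : Measure ℝ).withDensity
      (fun v => ENNReal.ofReal (if 1 < v then -Real.log (1 - 1/v) - 1/v else 0)) :=
  stmt2_general P U V hU hV p hp hjoint
end

section
/- If a random variable V has density p_V(v) = -ln(1 - 1/v) - 1/v on (1,∞), then for all v ≥ 1, P(V > v) = Σ_{n=1}^∞ 1/(n(n+1)vⁿ). -/
/-!
Removing the first term of the series of `-log (1 - y)` at `y = 1/x` gives the density as
`∑ x^{-(n+2)}/(n+2)`. Monotone convergence integrates this termwise over `(v, ∞)`, and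
`∫_v^∞ x^{-(n+2)} dx = 1/((n+1) v^{n+1})`.
-/

open MeasureTheory Real Set

lemma hasSum_pow_add_two_div {y : ℝ} (hy : |y| < 1) :
    HasSum (fun n : ℕ => y ^ (n + 2) / (n + 2)) (-log (1 - y) - y) := by
  have h := (hasSum_nat_add_iff' 1).mpr (hasSum_pow_div_log_of_abs_lt_one hy)
  simpa [add_assoc, one_add_one_eq_two] using h

lemma one_div_pow_add_two_eq_rpow {x : ℝ} (hx : 0 < x) (n : ℕ) :
    (1 / x) ^ (n + 2) = x ^ (-((n : ℝ) + 2)) := by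
  rw [rpow_neg hx.le, show (n : ℝ) + 2 = ((n + 2 : ℕ) : ℝ) by push_cast; ring, rpow_natCast,
    one_div, inv_pow]

lemma integrableOn_Ioi_one_div_pow_add_two {c : ℝ} (hc : 0 < c) (n : ℕ) :
    IntegrableOn (fun x : ℝ => (1 / x) ^ (n + 2)) (Ioi c) := by
  refine (integrableOn_Ioi_rpow_of_lt (a := -((n : ℝ) + 2)) (by linarith [n.cast_nonneg (α := ℝ)])
    hc).congr_fun (fun x hx => ?_) measurableSet_Ioi
  exact (one_div_pow_add_two_eq_rpow (hc.trans hx) n).symm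

lemma integral_Ioi_one_div_pow_add_two {c : ℝ} (hc : 0 < c) (n : ℕ) :
    ∫ x in Ioi c, (1 / x) ^ (n + 2) = 1 / ((n + 1) * c ^ (n + 1)) := by
  rw [setIntegral_congr_fun measurableSet_Ioi
      (fun x hx => one_div_pow_add_two_eq_rpow (hc.trans hx) n),
    integral_Ioi_rpow_of_lt (by linarith [n.cast_nonneg (α := ℝ)]) hc,
    show -((n : ℝ) + 2) + 1 = -((n + 1 : ℕ) : ℝ) by push_cast; ring,
    rpow_neg hc.le, rpow_natCast]
  push_cast
  field_simp

lemma lintegral_Ioi_one_div_pow_add_two_div {c : ℝ} (hc : 0 < c) (n : ℕ) :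
    ∫⁻ x in Ioi c, ENNReal.ofReal ((1 / x) ^ (n + 2) / (n + 2))
      = ENNReal.ofReal (1 / ((n + 1) * (n + 2) * c ^ (n + 1))) := by
  rw [← ofReal_integral_eq_lintegral_ofReal
      ((integrableOn_Ioi_one_div_pow_add_two hc n).div_const _), integral_div,
    integral_Ioi_one_div_pow_add_two hc n, div_div, mul_right_comm]
  filter_upwards [self_mem_ae_restrict measurableSet_Ioi] with x hx
  have : 0 < x := hc.trans hx
  positivity

lemma measure_lt_eq_setLIntegral {Ω : Type*} [MeasurableSpace Ω] {P : Measure Ω} {V : Ω → ℝ}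
    (hV : Measurable V) {f : ℝ → ENNReal} (hlaw : P.map V = volume.withDensity f) (v : ℝ) :
    P {ω | v < V ω} = ∫⁻ x in Ioi v, f x := by
  rw [← withDensity_apply _ measurableSet_Ioi, ← hlaw, Measure.map_apply hV measurableSet_Ioi]
  rfl

lemma ofReal_density_eq_tsum {x : ℝ} (hx : 1 < x) :
    ENNReal.ofReal (if 1 < x then -log (1 - 1 / x) - 1 / x else 0)
      = ∑' n : ℕ, ENNReal.ofReal ((1 / x) ^ (n + 2) / (n + 2)) := by
  have hy : |1 / x| < 1 := by
    rw [abs_of_pos (by positivity), div_lt_one (by linarith)]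
    exact hx
  have h := hasSum_pow_add_two_div hy
  rw [if_pos hx, ← h.tsum_eq,
    ENNReal.ofReal_tsum_of_nonneg (fun n => by positivity) h.summable]

theorem stmt3_general {Ω : Type*} [MeasurableSpace Ω] (P : Measure Ω)
    (V : Ω → ℝ) (hV : Measurable V)
    (hlaw : P.map V = (volume : Measure ℝ).withDensity
      (fun v => ENNReal.ofReal (if 1 < v then -Real.log (1 - 1/v) - 1/v else 0))) :
    ∀ v : ℝ, 1 ≤ v →
      (P {ω | v < V ω}).toReal
        = ∑' n : ℕ, 1 / (((n:ℝ)+1) * ((n:ℝ)+2) * v ^ (n+1)) := by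
  intro v hv
  have hv0 : 0 < v := one_pos.trans_le hv
  rw [measure_lt_eq_setLIntegral hV hlaw,
    setLIntegral_congr_fun measurableSet_Ioi (fun x hx => ofReal_density_eq_tsum (hv.trans_lt hx)),
    lintegral_tsum (fun n => by fun_prop),
    tsum_congr (lintegral_Ioi_one_div_pow_add_two_div hv0),
    ENNReal.tsum_toReal_eq (fun n => ENNReal.ofReal_ne_top)]
  exact tsum_congr fun n => ENNReal.toReal_ofReal (by positivity)

/-- If V has density p_V(v) = -ln(1-1/v) - 1/v on (1,∞), then for v ≥ 1,
P(V > v) = Σ_{n=1}^∞ 1/(n(n+1)vⁿ). -/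
theorem stmt3 {Ω : Type*} [MeasurableSpace Ω] (P : Measure Ω) [IsProbabilityMeasure P]
    (V : Ω → ℝ) (hV : Measurable V)
    (hlaw : P.map V = (volume : Measure ℝ).withDensity
      (fun v => ENNReal.ofReal (if 1 < v then -Real.log (1 - 1/v) - 1/v else 0))) :
    ∀ v : ℝ, 1 ≤ v →
      (P {ω | v < V ω}).toReal
        = ∑' n : ℕ, 1 / (((n:ℝ)+1) * ((n:ℝ)+2) * v ^ (n+1)) :=
  stmt3_general P V hV hlaw
end

section
/- Let (T_i')_{i≥1} be i.i.d. positive random variables with P(T_1' ≥ t) ≤ c₁/ln t for all t > 1 and some c₁ > 0. Fix r_+ > 1 and 1 < a < e. Then there is a constant c > 0 such that for every sequence δ(k) → 0 with δ(k) > 0, eventually in k: P[k·max_{i≤k} r_+^{i-1}·T_i' ≥ e^{k/δ(k)}] ≤ c·δ(k). -/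
open MeasureTheory ProbabilityTheory Real

/-! Put `L = k / (2 δ(k))`. Once `δ(k) (1 + ln r₊) ≤ 1/2`, every weight satisfies
`k r₊^(i-1) ≤ e^{k (1 + ln r₊)} ≤ e^L`, so the event forces `T_i' ≥ e^{2L} / e^L = e^L` for some
`i ≤ k`. By the tail bound each of these `k` events has probability at most
`c₁ / L = 2 c₁ δ(k) / k`, and a union bound gives `2 c₁ δ(k)`. -/

theorem measureReal_biUnion_le_card_mul {ι Ω : Type*} [MeasurableSpace Ω] (μ : Measure Ω)
    (s : Finset ι) (A : ι → Set Ω) {b : ℝ} (h : ∀ i ∈ s, μ.real (A i) ≤ b) :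
    μ.real (⋃ i ∈ s, A i) ≤ s.card * b :=
  (measureReal_biUnion_finset_le s A).trans (by simpa using Finset.sum_le_card_nsmul s _ b h)

theorem natCast_mul_pow_le_exp {r : ℝ} (hr : 1 ≤ r) {j k : ℕ} (hjk : j ≤ k) :
    (k : ℝ) * r ^ j ≤ exp (k * (1 + log r)) := by
  have hk : (k : ℝ) ≤ exp k := by linarith [add_one_le_exp (k : ℝ)]
  have hpow : r ^ j ≤ exp (k * log r) := by
    rw [exp_nat_mul, exp_log (by linarith)]
    exact pow_le_pow_right₀ hr hjk
  rw [mul_one_add, exp_add]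
  exact mul_le_mul hk hpow (by positivity) (exp_nonneg _)

theorem exp_le_of_exp_add_le_mul {a b M T : ℝ} (hM : 0 ≤ M) (hMa : M ≤ exp a)
    (h : exp (a + b) ≤ M * T) : exp b ≤ T := by
  rw [exp_add] at h
  have hT : 0 ≤ T := by
    by_contra! hT
    nlinarith [exp_pos a, exp_pos b]
  nlinarith [exp_pos a, exp_pos b]

theorem exp_half_le_of_exp_le_natCast_mul_pow_mul {r δ T : ℝ} (hr : 1 ≤ r) (hδ : 0 < δ)
    (hδr : δ * (1 + log r) ≤ 1 / 2) {j k : ℕ} (hjk : j ≤ k)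
    (h : exp (k / δ) ≤ k * (r ^ j * T)) : exp (k / δ / 2) ≤ T := by
  have hexponent : (k : ℝ) * (1 + log r) ≤ k / δ / 2 := by
    rw [div_div, le_div_iff₀ (by positivity)]
    nlinarith [(Nat.cast_nonneg k : (0 : ℝ) ≤ k)]
  refine exp_le_of_exp_add_le_mul (by positivity)
    ((natCast_mul_pow_le_exp hr hjk).trans (exp_le_exp.2 hexponent)) ?_
  rwa [add_halves, mul_assoc]

theorem stmt12_general {Ω : Type*} [MeasurableSpace Ω] (P : Measure Ω) [IsProbabilityMeasure P]
    (T' : ℕ → Ω → ℝ)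
    (hident : ∀ i, IdentDistrib (T' i) (T' 1) P P)
    (c₁ : ℝ) (hc₁ : 0 < c₁)
    (htail : ∀ t : ℝ, 1 < t → (P {ω | t ≤ T' 1 ω}).toReal ≤ c₁ / Real.log t)
    (rp : ℝ) (hrp : 1 < rp) :
    ∃ c > 0, ∀ δ : ℕ → ℝ, (∀ k, 0 < δ k) → Filter.Tendsto δ Filter.atTop (nhds 0) →
      ∀ᶠ k : ℕ in Filter.atTop,
        (P {ω | ∃ i, 1 ≤ i ∧ i ≤ k ∧
            Real.exp ((k:ℝ) / δ k) ≤ (k:ℝ) * (rp ^ (i-1) * T' i ω)}).toReal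
          ≤ c * δ k := by
  refine ⟨2 * c₁, by positivity, fun δ hδpos hδ0 => ?_⟩
  have hsmall : ∀ᶠ k in Filter.atTop, δ k * (1 + log rp) < 1 / 2 :=
    (hδ0.mul_const _).eventually (gt_mem_nhds (by norm_num))
  filter_upwards [hsmall, Filter.eventually_ge_atTop 1] with k hδk hk
  set L := (k : ℝ) / δ k / 2
  have hL : 0 < L := by have := hδpos k; positivity
  have hsub : {ω | ∃ i, 1 ≤ i ∧ i ≤ k ∧ exp ((k:ℝ) / δ k) ≤ (k:ℝ) * (rp ^ (i-1) * T' i ω)}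
      ⊆ ⋃ i ∈ Finset.Icc 1 k, {ω | exp L ≤ T' i ω} := by
    rintro ω ⟨i, hi1, hik, hevent⟩
    exact Set.mem_biUnion (Finset.mem_Icc.2 ⟨hi1, hik⟩)
      (exp_half_le_of_exp_le_natCast_mul_pow_mul hrp.le (hδpos k) hδk.le (by omega) hevent)
  have htail_i : ∀ i ∈ Finset.Icc 1 k, P.real {ω | exp L ≤ T' i ω} ≤ c₁ / L := fun i _ => by
    change P.real (T' i ⁻¹' Set.Ici (exp L)) ≤ _
    rw [measureReal_def, (hident i).measure_mem_eq measurableSet_Ici]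
    have h := htail (exp L) (one_lt_exp_iff.2 hL)
    rwa [log_exp] at h
  calc P.real _ ≤ P.real (⋃ i ∈ Finset.Icc 1 k, {ω | exp L ≤ T' i ω}) :=
        measureReal_mono hsub (measure_ne_top _ _)
    _ ≤ (Finset.Icc 1 k).card * (c₁ / L) := measureReal_biUnion_le_card_mul P _ _ htail_i
    _ = 2 * c₁ * δ k := by
      have := hδpos k
      simp only [Nat.card_Icc, add_tsub_cancel_right, L]
      field_simp

/-- If (T_i') are i.i.d. positive with P(T' ≥ t) ≤ c₁/ln t for t > 1, and r₊ > 1, then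
there is c > 0 such that for every positive sequence δ(k) → 0, eventually in k,
P[k·max_{1≤i≤k} r₊^{i-1} T_i' ≥ e^{k/δ(k)}] ≤ c·δ(k). -/
theorem stmt12 {Ω : Type*} [MeasurableSpace Ω] (P : Measure Ω) [IsProbabilityMeasure P]
    (T' : ℕ → Ω → ℝ) (hmeas : ∀ i, Measurable (T' i))
    (hindep : iIndepFun T' P)
    (hident : ∀ i, IdentDistrib (T' i) (T' 1) P P)
    (hpos : ∀ i, ∀ᵐ ω ∂P, 0 < T' i ω)
    (c₁ : ℝ) (hc₁ : 0 < c₁)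
    (htail : ∀ t : ℝ, 1 < t → (P {ω | t ≤ T' 1 ω}).toReal ≤ c₁ / Real.log t)
    (rp : ℝ) (hrp : 1 < rp) :
    ∃ c > 0, ∀ δ : ℕ → ℝ, (∀ k, 0 < δ k) → Filter.Tendsto δ Filter.atTop (nhds 0) →
      ∀ᶠ k : ℕ in Filter.atTop,
        (P {ω | ∃ i, 1 ≤ i ∧ i ≤ k ∧
            Real.exp ((k:ℝ) / δ k) ≤ (k:ℝ) * (rp ^ (i-1) * T' i ω)}).toReal
          ≤ c * δ k :=
  stmt12_general P T' hident c₁ hc₁ htail rp hrp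
end

section
/- Let (S_n)_{n≥1} be random variables such that for all 1 ≤ n < m there is a decomposition S_m = c_{n,m}·S_n + S_{n+1}^m with c_{n,m} > 0, where S_{n+1}^m is independent of S_n and equal in law to S_{m-n}. Let (t_n) be non-increasing positive reals with Σ_n P[S_n ≤ t_n] = ∞ and suppose S_n, S_{n+1}^m ≥ 0. Then P[S_n ≤ t_n infinitely often] ≥ 1/4. -/
/-!
Write `A n = {S n ≤ t n}`. Since `S m ≥ S_{n+1}^m` and `t` is non-increasing,
`A n ∩ A m ⊆ A n ∩ {S_{n+1}^m ≤ t (m - n)}`, so independence gives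
`P (A n ∩ A m) ≤ P (A n) * P (A (m - n))`. Summed over a block `N ≤ i, j < k`, this bounds the
second moment of the number of events of the block by `2 s (1 + T k)`, where `s` is its first
moment and `T k = ∑_{d < k} P (A d)`. Divergence of `∑ P (A n)` lets us take `k` so large that
`2 (1 + T k) ≤ 4 s`, and the Chung–Erdős inequality `P (⋃ A i) ≥ s² / E[X²]` then gives
`P (⋃_{n ≥ N} A n) ≥ 1/4` for every `N`.
-/

open MeasureTheory ProbabilityTheory Filter Finset
open scoped ENNReal Topology

theorem indicator_one_mul_indicator_one {α M₀ : Type*} [MulZeroOneClass M₀] (s t : Set α)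
    (a : α) : s.indicator (1 : α → M₀) a * t.indicator 1 a = (s ∩ t).indicator 1 a := by
  rw [Set.inter_indicator_one, Pi.mul_apply]

theorem Finset.sum_sum_le_two_nsmul_sum_sum_filter_le {ι M : Type*} [LinearOrder ι]
    [AddCommMonoid M] [PartialOrder M] [CanonicallyOrderedAdd M] (I : Finset ι)
    {f : ι → ι → M} (hf : ∀ i j, f i j = f j i) :
    ∑ i ∈ I, ∑ j ∈ I, f i j ≤ 2 • ∑ i ∈ I, ∑ j ∈ I with i ≤ j, f i j := by
  have hsplit : ∀ i j, f i j ≤ (if i ≤ j then f i j else 0) + (if j ≤ i then f i j else 0) := by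
    intro i j
    rcases le_total i j with h | h
    · simp only [if_pos h]; exact le_self_add
    · simp only [if_pos h]; exact le_add_self
  calc ∑ i ∈ I, ∑ j ∈ I, f i j
      ≤ ∑ i ∈ I, ∑ j ∈ I, ((if i ≤ j then f i j else 0) + (if j ≤ i then f i j else 0)) :=
        sum_le_sum fun i _ ↦ sum_le_sum fun j _ ↦ hsplit i j
    _ = 2 • ∑ i ∈ I, ∑ j ∈ I, if i ≤ j then f i j else 0 := by
        simp_rw [sum_add_distrib, two_nsmul]
        rw [sum_comm (f := fun i j ↦ if j ≤ i then f i j else 0)]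
        simp_rw [hf]
    _ = 2 • ∑ i ∈ I, ∑ j ∈ I with i ≤ j, f i j := by simp_rw [sum_filter]

section

variable {Ω : Type*} [MeasurableSpace Ω] {μ : Measure Ω}

theorem sq_lintegral_le_lintegral_sq_mul_measure {X : Ω → ℝ≥0∞} (hX : AEMeasurable X μ)
    {U : Set Ω} (hU : MeasurableSet U) (hXU : ∀ ω ∉ U, X ω = 0) :
    (∫⁻ ω, X ω ∂μ) ^ 2 ≤ (∫⁻ ω, X ω ^ 2 ∂μ) * μ U := by
  have hX_eq : X = X * U.indicator 1 := by
    ext ω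
    by_cases h : ω ∈ U <;> simp [h, hXU]
  have hU_sq : ∫⁻ ω, U.indicator 1 ω ^ (2 : ℝ) ∂μ = μ U := by
    simp_rw [ENNReal.rpow_two, sq, indicator_one_mul_indicator_one, Set.inter_self]
    exact lintegral_indicator_one hU
  have holder := ENNReal.lintegral_mul_le_Lp_mul_Lq μ Real.HolderConjugate.two_two hX
    (measurable_one.indicator hU).aemeasurable
  rw [← hX_eq, hU_sq, ← ENNReal.mul_rpow_of_nonneg _ _ (by norm_num)] at holder
  simp_rw [ENNReal.rpow_two] at holder
  calc (∫⁻ ω, X ω ∂μ) ^ 2 ≤ (((∫⁻ ω, X ω ^ 2 ∂μ) * μ U) ^ (1 / 2 : ℝ)) ^ 2 := by gcongr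
    _ = (∫⁻ ω, X ω ^ 2 ∂μ) * μ U := by
      rw [← ENNReal.rpow_natCast, ← ENNReal.rpow_mul]; norm_num

/-- The Chung–Erdős inequality: Cauchy–Schwarz for the number of events `A i` that occur. -/
theorem sq_sum_measure_le_mul_measure_biUnion {ι : Type*} (I : Finset ι) {A : ι → Set Ω}
    (hA : ∀ i, MeasurableSet (A i)) :
    (∑ i ∈ I, μ (A i)) ^ 2 ≤ (∑ i ∈ I, ∑ j ∈ I, μ (A i ∩ A j)) * μ (⋃ i ∈ I, A i) := by
  set X : Ω → ℝ≥0∞ := fun ω ↦ ∑ i ∈ I, (A i).indicator 1 ω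
  have hX : Measurable X := Finset.measurable_sum I fun i _ ↦ measurable_one.indicator (hA i)
  have hXU : ∀ ω ∉ ⋃ i ∈ I, A i, X ω = 0 := by
    intro ω hω
    simp only [Set.mem_iUnion, not_exists] at hω
    exact sum_eq_zero fun i hi ↦ Set.indicator_of_notMem (hω i hi) _
  have hint : ∫⁻ ω, X ω ∂μ = ∑ i ∈ I, μ (A i) := by
    rw [lintegral_finsetSum _ fun i _ ↦ measurable_one.indicator (hA i)]
    simp_rw [lintegral_indicator_one (hA _)]
  have hint_sq : ∫⁻ ω, X ω ^ 2 ∂μ = ∑ i ∈ I, ∑ j ∈ I, μ (A i ∩ A j) := by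
    simp_rw [X, sq, sum_mul_sum, indicator_one_mul_indicator_one]
    rw [lintegral_finsetSum _ fun i _ ↦ Finset.measurable_sum _ fun j _ ↦
      measurable_one.indicator ((hA i).inter (hA j))]
    refine sum_congr rfl fun i _ ↦ ?_
    rw [lintegral_finsetSum _ fun j _ ↦ measurable_one.indicator ((hA i).inter (hA j))]
    simp_rw [lintegral_indicator_one ((hA i).inter (hA _))]
  rw [← hint, ← hint_sq]
  exact sq_lintegral_le_lintegral_sq_mul_measure hX.aemeasurable
    (measurableSet_biUnion I fun i _ ↦ hA i) hXU

theorem measure_inter_le_mul_of_eq_mul_add {X Y Z W : Ω → ℝ} {c : ℝ} (hc : 0 ≤ c)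
    (hX : ∀ ω, 0 ≤ X ω) (hZ : ∀ ω, Z ω = c * X ω + Y ω) (hXY : IndepFun X Y μ)
    (hYW : IdentDistrib Y W μ μ) {a b b' : ℝ} (hb : b ≤ b') :
    μ ({ω | X ω ≤ a} ∩ {ω | Z ω ≤ b}) ≤ μ {ω | X ω ≤ a} * μ {ω | W ω ≤ b'} := by
  calc μ ({ω | X ω ≤ a} ∩ {ω | Z ω ≤ b})
      ≤ μ (X ⁻¹' Set.Iic a ∩ Y ⁻¹' Set.Iic b') := by
        refine measure_mono fun ω ⟨hXa, hZb⟩ ↦ ⟨hXa, ?_⟩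
        have := mul_nonneg hc (hX ω)
        simp only [Set.mem_ofPred_eq, hZ] at hZb
        simp only [Set.mem_preimage, Set.mem_Iic]
        linarith
    _ = μ (X ⁻¹' Set.Iic a) * μ (Y ⁻¹' Set.Iic b') :=
        hXY.measure_inter_preimage_eq_mul _ _ measurableSet_Iic measurableSet_Iic
    _ = μ {ω | X ω ≤ a} * μ {ω | W ω ≤ b'} := by
        rw [hYW.measure_mem_eq measurableSet_Iic]; rfl

section SubmultiplicativeEvents

variable {A : ℕ → Set Ω}
  (hinter : ∀ n m, 1 ≤ n → n < m → μ (A n ∩ A m) ≤ μ (A n) * μ (A (m - n)))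
include hinter

theorem sum_Ico_measure_inter_le {i : ℕ} (hi : 1 ≤ i) (k : ℕ) :
    ∑ j ∈ Ico i k, μ (A i ∩ A j) ≤ μ (A i) * (1 + ∑ d ∈ range k, μ (A d)) := by
  have hterm : ∀ j ∈ Ico i k,
      μ (A i ∩ A j) ≤ μ (A i) * ((if i = j then 1 else 0) + μ (A (j - i))) := by
    intro j hj
    rcases (mem_Ico.1 hj).1.eq_or_lt with rfl | hij
    · rw [if_pos rfl]
      exact (measure_mono Set.inter_subset_left).trans (le_mul_of_one_le_right' le_self_add)
    · rw [if_neg hij.ne, zero_add]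
      exact hinter i j hi hij
  calc ∑ j ∈ Ico i k, μ (A i ∩ A j)
      ≤ μ (A i) * ∑ j ∈ Ico i k, ((if i = j then 1 else 0) + μ (A (j - i))) := by
        rw [mul_sum]; exact sum_le_sum hterm
    _ ≤ μ (A i) * (1 + ∑ d ∈ range k, μ (A d)) := by
        rw [sum_add_distrib, sum_ite_eq]
        gcongr
        · split_ifs <;> simp
        · rw [sum_Ico_eq_sum_range]
          simp_rw [add_tsub_cancel_left]
          exact sum_le_sum_of_subset (range_subset_range.2 (Nat.sub_le k i))

theorem sum_sum_Ico_measure_inter_le {N : ℕ} (hN : 1 ≤ N) (k : ℕ) :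
    ∑ i ∈ Ico N k, ∑ j ∈ Ico N k, μ (A i ∩ A j)
      ≤ 2 * (∑ i ∈ Ico N k, μ (A i)) * (1 + ∑ d ∈ range k, μ (A d)) := by
  calc ∑ i ∈ Ico N k, ∑ j ∈ Ico N k, μ (A i ∩ A j)
      ≤ 2 • ∑ i ∈ Ico N k, ∑ j ∈ Ico N k with i ≤ j, μ (A i ∩ A j) :=
        sum_sum_le_two_nsmul_sum_sum_filter_le _ fun i j ↦ by rw [Set.inter_comm]
    _ = 2 * ∑ i ∈ Ico N k, ∑ j ∈ Ico i k, μ (A i ∩ A j) := by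
        rw [nsmul_eq_mul, Nat.cast_ofNat]
        congr 1
        refine sum_congr rfl fun i hi ↦ ?_
        rw [Ico_filter_le_of_left_le (mem_Ico.1 hi).1]
    _ ≤ 2 * ∑ i ∈ Ico N k, μ (A i) * (1 + ∑ d ∈ range k, μ (A d)) := by
        gcongr with i hi
        exact sum_Ico_measure_inter_le hinter (hN.trans (mem_Ico.1 hi).1) k
    _ = 2 * (∑ i ∈ Ico N k, μ (A i)) * (1 + ∑ d ∈ range k, μ (A d)) := by
        rw [mul_assoc, sum_mul]

variable [IsFiniteMeasure μ] (hA : ∀ n, MeasurableSet (A n)) (hdiv : ∑' n, μ (A n) = ∞)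
include hA hdiv

theorem quarter_le_measure_iUnion_ge {N : ℕ} (hN : 1 ≤ N) : 1 / 4 ≤ μ (⋃ n ≥ N, A n) := by
  set T : ℕ → ℝ≥0∞ := fun k ↦ ∑ d ∈ range k, μ (A d)
  have hT_ne_top : ∀ k, T k ≠ ∞ := fun k ↦ ENNReal.sum_ne_top.2 fun _ _ ↦ measure_ne_top μ _
  -- With `s` the sum over `[N, k)`, this choice makes `2 * (1 + T k) ≤ 4 * s`.
  obtain ⟨k, hNk, hk⟩ : ∃ k, N ≤ k ∧ 1 + 2 * T N < T k := by
    have hT : Tendsto T atTop (𝓝 ∞) := hdiv ▸ ENNReal.tendsto_nat_tsum _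
    have hlt : 1 + 2 * T N < ∞ := by have := hT_ne_top N; finiteness
    exact ((eventually_ge_atTop N).and (hT.eventually_const_lt hlt)).exists
  set s := ∑ i ∈ Ico N k, μ (A i)
  have hTk : T k = T N + s := (sum_range_add_sum_Ico _ hNk).symm
  have hs : 1 + T N ≤ s := by
    rw [← ENNReal.add_le_add_iff_left (hT_ne_top N)]
    calc T N + (1 + T N) = 1 + 2 * T N := by ring
      _ ≤ T k := hk.le
      _ = T N + s := hTk
  have hs_ne_zero : s ≠ 0 := (zero_lt_one.trans_le (le_self_add.trans hs)).ne'
  have hs_ne_top : s ≠ ∞ := ENNReal.sum_ne_top.2 fun _ _ ↦ measure_ne_top μ _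
  set U := ⋃ i ∈ Ico N k, A i
  have hbound : s ^ 2 * 1 ≤ s ^ 2 * (4 * μ U) := calc
    s ^ 2 * 1 ≤ (∑ i ∈ Ico N k, ∑ j ∈ Ico N k, μ (A i ∩ A j)) * μ U := by
        rw [mul_one]; exact sq_sum_measure_le_mul_measure_biUnion _ hA
    _ ≤ 2 * s * (1 + T k) * μ U := by
        gcongr; exact sum_sum_Ico_measure_inter_le hinter hN k
    _ ≤ 2 * s * (2 * s) * μ U := by
        gcongr
        calc 1 + T k = (1 + T N) + s := by rw [hTk, add_assoc]
          _ ≤ 2 * s := by rw [two_mul]; gcongr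
    _ = s ^ 2 * (4 * μ U) := by ring
  rw [ENNReal.mul_le_mul_iff_right (pow_ne_zero 2 hs_ne_zero) (ENNReal.pow_ne_top hs_ne_top)]
    at hbound
  calc 1 / 4 ≤ μ U := ENNReal.div_le_of_le_mul' hbound
    _ ≤ μ (⋃ n ≥ N, A n) := measure_mono <| Set.iUnion₂_subset fun i hi ↦
        Set.subset_biUnion_of_mem (u := A) (mem_Ico.1 hi).1

theorem quarter_le_measure_limsup : 1 / 4 ≤ μ (limsup A atTop) := by
  have hanti : Antitone fun N ↦ ⋃ n ≥ N, A n := fun N M hNM ↦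
    Set.biUnion_mono (fun n hn ↦ hNM.trans hn) fun _ _ ↦ le_rfl
  have hmeas : ∀ N, MeasurableSet (⋃ n ≥ N, A n) := fun N ↦
    MeasurableSet.biUnion (Set.to_countable _) fun n _ ↦ hA n
  rw [limsup_eq_iInf_iSup_of_nat]
  change 1 / 4 ≤ μ (⋂ N, ⋃ n ≥ N, A n)
  rw [hanti.measure_iInter (fun N ↦ (hmeas N).nullMeasurableSet) ⟨0, measure_ne_top μ _⟩]
  exact le_iInf fun N ↦ (quarter_le_measure_iUnion_ge hinter hA hdiv N.succ_pos).trans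
    (measure_mono (hanti N.le_succ))

end SubmultiplicativeEvents

end

theorem stmt13_general {Ω : Type*} [MeasurableSpace Ω] (P : Measure Ω) [IsProbabilityMeasure P]
    (S : ℕ → Ω → ℝ) (hmeas : ∀ n, Measurable (S n))
    (hnonneg : ∀ n ω, 0 ≤ S n ω)
    (hdecomp : ∀ n m : ℕ, 1 ≤ n → n < m → ∃ c : ℝ, 0 < c ∧ ∃ S' : Ω → ℝ,
      Measurable S' ∧ (∀ ω, 0 ≤ S' ω) ∧ (∀ ω, S m ω = c * S n ω + S' ω) ∧
      IndepFun (S n) S' P ∧ IdentDistrib S' (S (m - n)) P P)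
    (t : ℕ → ℝ) (htmono : Antitone t)
    (hdiv : ¬ Summable (fun n : ℕ => (P {ω | S (n+1) ω ≤ t (n+1)}).toReal)) :
    (1:ℝ)/4 ≤ (P {ω | ∀ N : ℕ, ∃ n ≥ N, S n ω ≤ t n}).toReal := by
  set A : ℕ → Set Ω := fun n ↦ {ω | S n ω ≤ t n}
  have hA : ∀ n, MeasurableSet (A n) := fun n ↦ measurableSet_le (hmeas n) measurable_const
  have hinter : ∀ n m, 1 ≤ n → n < m → P (A n ∩ A m) ≤ P (A n) * P (A (m - n)) := by
    intro n m hn hnm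
    obtain ⟨c, hc, S', -, -, hSm, hindep, hident⟩ := hdecomp n m hn hnm
    exact measure_inter_le_mul_of_eq_mul_add hc.le (hnonneg n) hSm hindep hident
      (htmono (Nat.sub_le m n))
  have hdiv' : ∑' n, P (A n) = ∞ := by
    have hshift : ∑' n, P (A (n + 1)) = ∞ := by
      by_contra h
      exact hdiv (ENNReal.summable_toReal h)
    exact top_unique (hshift ▸ ENNReal.tsum_comp_le_tsum_of_injective (add_left_injective 1) _)
  have hlimsup : {ω | ∀ N, ∃ n ≥ N, S n ω ≤ t n} = limsup A atTop := by
    ext ω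
    simp [mem_limsup_iff_frequently_mem, frequently_atTop, A]
  rw [hlimsup]
  calc (1 : ℝ) / 4 = (1 / 4 : ℝ≥0∞).toReal := by norm_num
    _ ≤ (P (limsup A atTop)).toReal :=
        ENNReal.toReal_mono (measure_ne_top P _) (quarter_le_measure_limsup hinter hA hdiv')

/-- If nonnegative random variables (S_n) admit for 1 ≤ n < m a decomposition
S_m = c·S_n + S' with c > 0, S' ≥ 0 independent of S_n and distributed as S_{m-n},
and (t_n) are non-increasing positive reals with Σ_{n≥1} P[S_n ≤ t_n] = ∞, then
P[S_n ≤ t_n infinitely often] ≥ 1/4. -/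
theorem stmt13 {Ω : Type*} [MeasurableSpace Ω] (P : Measure Ω) [IsProbabilityMeasure P]
    (S : ℕ → Ω → ℝ) (hmeas : ∀ n, Measurable (S n))
    (hnonneg : ∀ n ω, 0 ≤ S n ω)
    (hdecomp : ∀ n m : ℕ, 1 ≤ n → n < m → ∃ c : ℝ, 0 < c ∧ ∃ S' : Ω → ℝ,
      Measurable S' ∧ (∀ ω, 0 ≤ S' ω) ∧ (∀ ω, S m ω = c * S n ω + S' ω) ∧
      IndepFun (S n) S' P ∧ IdentDistrib S' (S (m - n)) P P)
    (t : ℕ → ℝ) (htpos : ∀ n, 0 < t n) (htmono : Antitone t)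
    (hdiv : ¬ Summable (fun n : ℕ => (P {ω | S (n+1) ω ≤ t (n+1)}).toReal)) :
    (1:ℝ)/4 ≤ (P {ω | ∀ N : ℕ, ∃ n ≥ N, S n ω ≤ t n}).toReal :=
  stmt13_general P S hmeas hnonneg hdecomp t htmono hdiv
end

section
/- Let (ξ_k)_{k≥1} be i.i.d. random vectors, and for β ≥ 0 define E = {liminf_n S_n·ln ln n ≤ β} where S_n = Σ_{i=1}^n T_i'/r^{2(U_i+⋯+U_n)} with (U_i, T_i') = ξ_i, r > 1, T_i' > 0, U_i ∈ [0,1]. If almost surely (ln ln n)/r^{2(U_1+⋯+U_n)} → 0, then P(E) ∈ {0,1}. -/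
open MeasureTheory ProbabilityTheory Filter Topology Real

/-! Dropping the first `k` summands of `S n` changes `S n · ln ln n` by
`D_k · ln ln n / r ^ (2 (U 1 + ⋯ + U n))` with `D_k` independent of `n`, which tends to `0` a.s.
by hypothesis; so the liminf is a.s. the same for the sum started at any `k + 1`. Hence the event
agrees a.s. with `limsup_k E_k`, where `E_k` is the event for the sum started at `k + 1` and depends
only on `ξ (k + 1), ξ (k + 2), …`; this is a tail event, and Kolmogorov's 0–1 law applies. -/

theorem Real.sSup_le_sSup_of_forall_sub_mem {A B : Set ℝ} (hA : A.Nonempty) (hB : BddAbove B)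
    (hAB : ∀ ε > 0, ∀ x ∈ A, x - ε ∈ B) : sSup A ≤ sSup B := by
  refine le_of_forall_pos_le_add fun ε hε => csSup_le hA fun x hx => ?_
  linarith [le_csSup hB (hAB ε hε x hx)]

/-- The two sets are simultaneously empty or unbounded, which covers the junk values of `sSup`. -/
theorem Real.sSup_eq_sSup_of_forall_sub_mem {A B : Set ℝ}
    (hAB : ∀ ε > 0, ∀ x ∈ A, x - ε ∈ B) (hBA : ∀ ε > 0, ∀ x ∈ B, x - ε ∈ A) :
    sSup A = sSup B := by
  rcases A.eq_empty_or_nonempty with rfl | hA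
  · rcases B.eq_empty_or_nonempty with rfl | ⟨x, hx⟩
    · rfl
    · exact (hBA 1 one_pos x hx).elim
  have hB : B.Nonempty := let ⟨x, hx⟩ := hA; ⟨_, hAB 1 one_pos x hx⟩
  by_cases hAbdd : BddAbove A
  · have hBbdd : BddAbove B := by
      obtain ⟨M, hM⟩ := hAbdd
      exact ⟨M + 1, fun x hx => by linarith [hM (hBA 1 one_pos x hx)]⟩
    exact le_antisymm (sSup_le_sSup_of_forall_sub_mem hA hBbdd hAB)
      (sSup_le_sSup_of_forall_sub_mem hB hAbdd hBA)
  · have hBbdd : ¬BddAbove B := fun ⟨M, hM⟩ =>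
      hAbdd ⟨M + 1, fun x hx => by linarith [hM (hAB 1 one_pos x hx)]⟩
    rw [Real.sSup_of_not_bddAbove hAbdd, Real.sSup_of_not_bddAbove hBbdd]

theorem Filter.liminf_eq_liminf_of_tendsto_sub {α : Type*} {l : Filter α} {f g : α → ℝ}
    (h : Tendsto (fun x => f x - g x) l (𝓝 0)) : liminf f l = liminf g l := by
  rw [liminf_eq, liminf_eq]
  refine Real.sSup_eq_sSup_of_forall_sub_mem (fun ε hε x hx => ?_) (fun ε hε x hx => ?_)
  · filter_upwards [hx, h.eventually_lt_const hε] with a hxa hfg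
    linarith
  · filter_upwards [hx, h.eventually_const_lt (neg_neg_iff_pos.2 hε)] with a hxa hfg
    linarith

theorem measurableSet_limsup_of_forall_measurableSet_iSup_ge {Ω : Type*}
    {s : ℕ → MeasurableSpace Ω} {E : ℕ → Set Ω} (hE : ∀ k, MeasurableSet[⨆ i ≥ k, s i] (E k)) :
    MeasurableSet[limsup s atTop] (limsup E atTop) := by
  rw [limsup_eq_iInf_iSup_of_nat (u := s), MeasurableSpace.measurableSet_iInf]
  intro n
  rw [← limsup_nat_add E n]
  refine @MeasurableSet.measurableSet_limsup _ (⨆ i ≥ n, s i) _ fun k => ?_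
  have hmono : ⨆ i ≥ k + n, s i ≤ ⨆ i ≥ n, s i := iSup₂_mono' fun i hi => ⟨i, by omega, le_rfl⟩
  exact hmono _ (hE (k + n))

/-- `S n = tailSum r U T 0 n`, and `tailSum r U T k n` is the sum built from the sequence shifted
by `k`. -/
noncomputable def tailSum (r : ℝ) (U T : ℕ → ℝ) (k n : ℕ) : ℝ :=
  ∑ i ∈ Finset.Icc (k + 1) n, T i / r ^ (2 * ∑ j ∈ Finset.Icc i n, U j)

section tailSum

variable {r : ℝ} {U T : ℕ → ℝ}

theorem tailSum_zero_sub_tailSum (hr : 0 < r) {k n : ℕ} (hkn : k ≤ n) :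
    tailSum r U T 0 n - tailSum r U T k n =
      (∑ i ∈ Finset.Icc 1 k, T i * r ^ (2 * ∑ j ∈ Finset.Ico 1 i, U j)) /
        r ^ (2 * ∑ j ∈ Finset.Icc 1 n, U j) := by
  have hsplit : tailSum r U T 0 n = ∑ i ∈ Finset.Icc 1 k, T i / r ^ (2 * ∑ j ∈ Finset.Icc i n, U j)
      + tailSum r U T k n := by
    simp only [tailSum, ← Finset.Ico_add_one_right_eq_Icc]
    exact (Finset.sum_Ico_consecutive _ (by omega) (by omega)).symm
  rw [hsplit, add_sub_cancel_right, Finset.sum_div]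
  refine Finset.sum_congr rfl fun i hi => ?_
  obtain ⟨hi1, hik⟩ := Finset.mem_Icc.1 hi
  have hU : ∑ j ∈ Finset.Icc i n, U j = ∑ j ∈ Finset.Icc 1 n, U j - ∑ j ∈ Finset.Ico 1 i, U j := by
    simp only [← Finset.Ico_add_one_right_eq_Icc]
    rw [← Finset.sum_Ico_consecutive U hi1 (by omega : i ≤ n + 1)]
    ring
  rw [hU, mul_sub, Real.rpow_sub hr, div_div_eq_mul_div]

theorem tendsto_tailSum_zero_sub_tailSum_mul_log_log (hr : 0 < r)
    (h0 : Tendsto (fun n : ℕ => log (log n) / r ^ (2 * ∑ i ∈ Finset.Icc 1 n, U i)) atTop (𝓝 0))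
    (k : ℕ) :
    Tendsto (fun n : ℕ => tailSum r U T 0 n * log (log n) - tailSum r U T k n * log (log n))
      atTop (𝓝 0) := by
  have hD := h0.const_mul (∑ i ∈ Finset.Icc 1 k, T i * r ^ (2 * ∑ j ∈ Finset.Ico 1 i, U j))
  rw [mul_zero] at hD
  refine hD.congr' ?_
  filter_upwards [eventually_ge_atTop k] with n hkn
  rw [← sub_mul, tailSum_zero_sub_tailSum hr hkn]
  ring

theorem measurable_tailSum {Ω : Type*} {m : MeasurableSpace Ω} {X : ℕ → Ω → ℝ × ℝ} {k : ℕ}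
    (hX : ∀ i, k < i → Measurable (X i)) (r : ℝ) (n : ℕ) :
    Measurable fun ω => tailSum r (fun i => (X i ω).1) (fun i => (X i ω).2) k n := by
  refine Finset.measurable_sum _ fun i hi => ?_
  have hki : k < i := (Finset.mem_Icc.1 hi).1
  refine (hX i hki).snd.div (measurable_const.pow (.const_mul ?_ 2))
  exact Finset.measurable_sum _ fun j hj => (hX j (hki.trans_le (Finset.mem_Icc.1 hj).1)).fst

end tailSum

theorem stmt19_general {Ω : Type*} [MeasurableSpace Ω] (P : Measure Ω) [IsProbabilityMeasure P]
    (ξ : ℕ → Ω → ℝ × ℝ) (hmeas : ∀ i, Measurable (ξ i))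
    (hindep : iIndepFun ξ P)
    (r : ℝ) (hr : 1 < r)
    (S : ℕ → Ω → ℝ)
    (hS : ∀ n ω, S n ω = ∑ i ∈ Finset.Icc 1 n,
      (ξ i ω).2 / r ^ (2 * ∑ j ∈ Finset.Icc i n, (ξ j ω).1))
    (h0 : ∀ᵐ ω ∂P, Filter.Tendsto
      (fun n : ℕ => Real.log (Real.log n) / r ^ (2 * ∑ i ∈ Finset.Icc 1 n, (ξ i ω).1))
      Filter.atTop (nhds 0))
    (β : ℝ) :
    P {ω | Filter.atTop.liminf (fun n : ℕ => S n ω * Real.log (Real.log n)) ≤ β} = 0 ∨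
    P {ω | Filter.atTop.liminf (fun n : ℕ => S n ω * Real.log (Real.log n)) ≤ β} = 1 := by
  have hr0 : 0 < r := one_pos.trans hr
  set E : ℕ → Set Ω := fun k => {ω | atTop.liminf (fun n : ℕ =>
    tailSum r (fun i => (ξ i ω).1) (fun i => (ξ i ω).2) k n * log (log n)) ≤ β}
  have htail : MeasurableSet[limsup (fun i => MeasurableSpace.comap (ξ i) inferInstance) atTop]
      (limsup E atTop : Set Ω) := by
    refine measurableSet_limsup_of_forall_measurableSet_iSup_ge fun k => ?_
    have hξ : ∀ i, k < i → Measurable[⨆ j ≥ k, MeasurableSpace.comap (ξ j) inferInstance] (ξ i) :=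
      fun i hi => measurable_iff_comap_le.2 (le_iSup₂ (f := fun j (_ : j ≥ k) =>
        MeasurableSpace.comap (ξ j) inferInstance) i hi.le)
    exact measurableSet_le (Measurable.liminf fun n => (measurable_tailSum hξ r n).mul_const _)
      measurable_const
  have hae : {ω | atTop.liminf (fun n : ℕ => S n ω * log (log n)) ≤ β} =ᵐ[P]
      (limsup E atTop : Set Ω) := by
    refine eventuallyEq_set.2 ?_
    filter_upwards [h0] with ω hω
    have hS' : ∀ n, S n ω = tailSum r (fun i => (ξ i ω).1) (fun i => (ξ i ω).2) 0 n :=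
      fun n => hS n ω
    have hE : ∀ k, ω ∈ E k ↔ atTop.liminf (fun n : ℕ => S n ω * log (log n)) ≤ β := fun k => by
      simp only [E, Set.mem_ofPred_eq, hS',
        liminf_eq_liminf_of_tendsto_sub (tendsto_tailSum_zero_sub_tailSum_mul_log_log hr0 hω k)]
    simp only [mem_limsup_iff_frequently_mem, hE, frequently_const]
  rw [measure_congr hae]
  exact measure_zero_or_one_of_measurableSet_limsup_atTop (fun i => (hmeas i).comap_le)
    hindep.iIndep htail

/-- Kolmogorov 0–1 law for E = {liminf_n S_n·ln ln n ≤ β}, where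
S_n = Σ_{i=1}^n T_i'/r^{2(U_i+⋯+U_n)} is built from the i.i.d. sequence ξ_i = (U_i, T_i'),
assuming a.s. (ln ln n)/r^{2(U_1+⋯+U_n)} → 0. -/
theorem stmt19 {Ω : Type*} [MeasurableSpace Ω] (P : Measure Ω) [IsProbabilityMeasure P]
    (ξ : ℕ → Ω → ℝ × ℝ) (hmeas : ∀ i, Measurable (ξ i))
    (hindep : iIndepFun ξ P)
    (hident : ∀ i, IdentDistrib (ξ i) (ξ 1) P P)
    (r : ℝ) (hr : 1 < r)
    (hU : ∀ i, ∀ᵐ ω ∂P, (ξ i ω).1 ∈ Set.Icc (0:ℝ) 1)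
    (hT : ∀ i, ∀ᵐ ω ∂P, 0 < (ξ i ω).2)
    (S : ℕ → Ω → ℝ)
    (hS : ∀ n ω, S n ω = ∑ i ∈ Finset.Icc 1 n,
      (ξ i ω).2 / r ^ (2 * ∑ j ∈ Finset.Icc i n, (ξ j ω).1))
    (h0 : ∀ᵐ ω ∂P, Filter.Tendsto
      (fun n : ℕ => Real.log (Real.log n) / r ^ (2 * ∑ i ∈ Finset.Icc 1 n, (ξ i ω).1))
      Filter.atTop (nhds 0))
    (β : ℝ) (hβ : 0 ≤ β) :
    P {ω | Filter.atTop.liminf (fun n : ℕ => S n ω * Real.log (Real.log n)) ≤ β} = 0 ∨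
    P {ω | Filter.atTop.liminf (fun n : ℕ => S n ω * Real.log (Real.log n)) ≤ β} = 1 :=
  stmt19_general P ξ hmeas hindep r hr S hS h0 β
end
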